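/- arXiv:2008.00758 — 7 statements merged into one kernel-verified Lean document; each statement's English description precedes it below -/
import Mathlib

section
/- For every bounded linear operator S on a complex Hilbert space H, max{w(S), ‖S‖²} ≤ dw(S) ≤ √(w(S)² + ‖S‖⁴), where w is the numerical radius and dw is the Davis–Wielandt radius. -/
open scoped InnerProductSpace ComplexConjugate

variable {H : Type*} [NormedAddCommGroup H] [InnerProductSpace ℂ H] [CompleteSpace H]

/-- The numerical radius of a bounded operator. -/
noncomputable def numRadius (S : H →L[ℂ] H) : ℝ :=
  ⨆ x : {x : H // ‖x‖ = 1}, ‖(⟪S x.1, x.1⟫_ℂ : ℂ)‖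

/-- The Davis–Wielandt radius of a bounded operator. -/
noncomputable def dwRadius (S : H →L[ℂ] H) : ℝ :=
  ⨆ x : {x : H // ‖x‖ = 1}, Real.sqrt (‖(⟪S x.1, x.1⟫_ℂ : ℂ)‖ ^ 2 + ‖S x.1‖ ^ 4)

lemma norm_apply_le (S : H →L[ℂ] H) (x : {x : H // ‖x‖ = 1}) : ‖S x.1‖ ≤ ‖S‖ := by
  simpa [x.2] using S.le_opNorm x.1

lemma inner_le_normS (S : H →L[ℂ] H) (x : {x : H // ‖x‖ = 1}) :
    ‖(⟪S x.1, x.1⟫_ℂ : ℂ)‖ ≤ ‖S‖ :=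
  calc ‖(⟪S x.1, x.1⟫_ℂ : ℂ)‖ ≤ ‖S x.1‖ * ‖x.1‖ := norm_inner_le_norm _ _
  _ ≤ ‖S‖ := by rw [x.2, mul_one]; exact norm_apply_le S x

lemma dw_bddAbove (S : H →L[ℂ] H) :
    BddAbove (Set.range fun x : {x : H // ‖x‖ = 1} =>
      Real.sqrt (‖(⟪S x.1, x.1⟫_ℂ : ℂ)‖ ^ 2 + ‖S x.1‖ ^ 4)) := by
  refine ⟨Real.sqrt (‖S‖ ^ 2 + ‖S‖ ^ 4), ?_⟩
  rintro _ ⟨x, rfl⟩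
  apply Real.sqrt_le_sqrt
  exact add_le_add (pow_le_pow_left₀ (norm_nonneg _) (inner_le_normS S x) 2)
    (pow_le_pow_left₀ (norm_nonneg _) (norm_apply_le S x) 4)

lemma nr_bddAbove (S : H →L[ℂ] H) :
    BddAbove (Set.range fun x : {x : H // ‖x‖ = 1} => ‖(⟪S x.1, x.1⟫_ℂ : ℂ)‖) := by
  refine ⟨‖S‖, ?_⟩
  rintro _ ⟨x, rfl⟩
  exact inner_le_normS S x

lemma dw_nonneg (S : H →L[ℂ] H) : 0 ≤ dwRadius S :=
  Real.iSup_nonneg fun x => Real.sqrt_nonneg _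

lemma nr_nonneg (S : H →L[ℂ] H) : 0 ≤ numRadius S :=
  Real.iSup_nonneg fun x => norm_nonneg _

theorem dw_bounds (S : H →L[ℂ] H) :
    max (numRadius S) (‖S‖ ^ 2) ≤ dwRadius S ∧
      dwRadius S ≤ Real.sqrt ((numRadius S) ^ 2 + ‖S‖ ^ 4) := by
  have key : ∀ x : {x : H // ‖x‖ = 1},
      Real.sqrt (‖(⟪S x.1, x.1⟫_ℂ : ℂ)‖ ^ 2 + ‖S x.1‖ ^ 4) ≤ dwRadius S :=
    fun x => le_ciSup (dw_bddAbove S) x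
  constructor
  · rw [max_le_iff]
    constructor
    · -- numRadius ≤ dwRadius
      apply Real.iSup_le _ (dw_nonneg S)
      intro x
      calc ‖(⟪S x.1, x.1⟫_ℂ : ℂ)‖
          = Real.sqrt (‖(⟪S x.1, x.1⟫_ℂ : ℂ)‖ ^ 2) := by
            rw [Real.sqrt_sq (norm_nonneg _)]
        _ ≤ Real.sqrt (‖(⟪S x.1, x.1⟫_ℂ : ℂ)‖ ^ 2 + ‖S x.1‖ ^ 4) := by
            apply Real.sqrt_le_sqrt; nlinarith [pow_nonneg (norm_nonneg (S x.1)) 4]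
        _ ≤ dwRadius S := key x
    · -- ‖S‖^2 ≤ dwRadius
      have hx : ∀ x : {x : H // ‖x‖ = 1}, ‖S x.1‖ ^ 2 ≤ dwRadius S := by
        intro x
        calc ‖S x.1‖ ^ 2 = Real.sqrt ((‖S x.1‖ ^ 2) ^ 2) := by
              rw [Real.sqrt_sq (sq_nonneg _)]
          _ ≤ Real.sqrt (‖(⟪S x.1, x.1⟫_ℂ : ℂ)‖ ^ 2 + ‖S x.1‖ ^ 4) := by
              apply Real.sqrt_le_sqrt
              nlinarith [sq_nonneg ‖(⟪S x.1, x.1⟫_ℂ : ℂ)‖]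
          _ ≤ dwRadius S := key x
      have hS : ‖S‖ ≤ Real.sqrt (dwRadius S) := by
        apply S.opNorm_le_bound (Real.sqrt_nonneg _)
        intro y
        rcases eq_or_ne y 0 with rfl | hy
        · simp
        · have hny : ‖y‖ ≠ 0 := norm_ne_zero_iff.mpr hy
          set u : H := ‖y‖⁻¹ • y with hu
          have hun : ‖u‖ = 1 := by
            rw [hu, norm_smul, norm_inv, norm_norm, inv_mul_cancel₀ hny]
          have h2 := hx ⟨u, hun⟩
          have hSu : ‖S u‖ ^ 2 ≤ dwRadius S := h2
          have hSu' : ‖S u‖ ≤ Real.sqrt (dwRadius S) := by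
            rw [← Real.sqrt_sq (norm_nonneg (S u))]
            exact Real.sqrt_le_sqrt hSu
          have hSy : ‖S u‖ = ‖S y‖ / ‖y‖ := by
            rw [hu, S.map_smul_of_tower, norm_smul, norm_inv, norm_norm]
            field_simp
          rw [hSy, div_le_iff₀ (lt_of_le_of_ne (norm_nonneg y) (Ne.symm hny))] at hSu'
          exact hSu'
      calc ‖S‖ ^ 2 ≤ Real.sqrt (dwRadius S) ^ 2 := by
            gcongr
        _ = dwRadius S := Real.sq_sqrt (dw_nonneg S)
  · apply Real.iSup_le _ (Real.sqrt_nonneg _)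
    intro x
    apply Real.sqrt_le_sqrt
    have h1 : ‖(⟪S x.1, x.1⟫_ℂ : ℂ)‖ ≤ numRadius S := le_ciSup (nr_bddAbove S) x
    exact add_le_add (pow_le_pow_left₀ (norm_nonneg _) h1 2)
      (pow_le_pow_left₀ (norm_nonneg _) (norm_apply_le S x) 4)
end

section
/- For every bounded linear operator S on a complex Hilbert space, w(S)² + ‖S‖⁴ ≥ dw(S)² ≥ max{w(S)², ‖S‖⁴} = (w(S)² + ‖S‖⁴)/2 + |w(S)² − ‖S‖⁴|/2 ≥ (w(S)² + ‖S‖⁴)/2. -/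
open scoped InnerProductSpace ComplexConjugate

variable {H : Type*} [NormedAddCommGroup H] [InnerProductSpace ℂ H] [CompleteSpace H]

theorem dw_sq_bounds (S : H →L[ℂ] H) :
    numRadius S ^ 2 + ‖S‖ ^ 4 ≥ dwRadius S ^ 2 ∧
    dwRadius S ^ 2 ≥ max (numRadius S ^ 2) (‖S‖ ^ 4) ∧
    max (numRadius S ^ 2) (‖S‖ ^ 4)
      = (numRadius S ^ 2 + ‖S‖ ^ 4) / 2 + |numRadius S ^ 2 - ‖S‖ ^ 4| / 2 ∧
    (numRadius S ^ 2 + ‖S‖ ^ 4) / 2 + |numRadius S ^ 2 - ‖S‖ ^ 4| / 2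
      ≥ (numRadius S ^ 2 + ‖S‖ ^ 4) / 2 := by
  have hSx : ∀ x : {x : H // ‖x‖ = 1}, ‖S x.1‖ ≤ ‖S‖ := by
    intro x
    calc ‖S x.1‖ ≤ ‖S‖ * ‖x.1‖ := S.le_opNorm x.1
    _ = ‖S‖ := by rw [x.2, mul_one]
  have hinner : ∀ x : {x : H // ‖x‖ = 1}, ‖(⟪S x.1, x.1⟫_ℂ : ℂ)‖ ≤ ‖S‖ := by
    intro x
    calc ‖(⟪S x.1, x.1⟫_ℂ : ℂ)‖ ≤ ‖S x.1‖ * ‖x.1‖ := norm_inner_le_norm _ _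
    _ = ‖S x.1‖ := by rw [x.2, mul_one]
    _ ≤ ‖S‖ := hSx x
  have hbdd1 : BddAbove (Set.range fun x : {x : H // ‖x‖ = 1} => ‖(⟪S x.1, x.1⟫_ℂ : ℂ)‖) := by
    refine ⟨‖S‖, ?_⟩; rintro _ ⟨x, rfl⟩; exact hinner x
  have hbdd2 : BddAbove (Set.range fun x : {x : H // ‖x‖ = 1} =>
      Real.sqrt (‖(⟪S x.1, x.1⟫_ℂ : ℂ)‖ ^ 2 + ‖S x.1‖ ^ 4)) := by
    refine ⟨Real.sqrt (‖S‖ ^ 2 + ‖S‖ ^ 4), ?_⟩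
    rintro _ ⟨x, rfl⟩
    apply Real.sqrt_le_sqrt
    gcongr
    · exact hinner x
    · exact hSx x
  have hw0 : 0 ≤ numRadius S := Real.iSup_nonneg fun x => norm_nonneg _
  have hdw0 : 0 ≤ dwRadius S := Real.iSup_nonneg fun x => Real.sqrt_nonneg _
  have hwterm : ∀ x : {x : H // ‖x‖ = 1}, ‖(⟪S x.1, x.1⟫_ℂ : ℂ)‖ ≤ numRadius S :=
    fun x => le_ciSup hbdd1 x
  have hdwterm : ∀ x : {x : H // ‖x‖ = 1},
      Real.sqrt (‖(⟪S x.1, x.1⟫_ℂ : ℂ)‖ ^ 2 + ‖S x.1‖ ^ 4) ≤ dwRadius S :=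
    fun x => le_ciSup hbdd2 x
  -- upper bound
  have h1 : numRadius S ^ 2 + ‖S‖ ^ 4 ≥ dwRadius S ^ 2 := by
    have hle : dwRadius S ≤ Real.sqrt (numRadius S ^ 2 + ‖S‖ ^ 4) := by
      apply Real.iSup_le _ (Real.sqrt_nonneg _)
      intro x
      apply Real.sqrt_le_sqrt
      gcongr
      · exact hwterm x
      · exact hSx x
    have := pow_le_pow_left₀ hdw0 hle 2
    rwa [Real.sq_sqrt (by positivity)] at this
  -- numRadius ≤ dwRadius
  have hw_le_dw : numRadius S ≤ dwRadius S := by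
    apply Real.iSup_le _ hdw0
    intro x
    refine le_trans ?_ (hdwterm x)
    calc ‖(⟪S x.1, x.1⟫_ℂ : ℂ)‖ = Real.sqrt (‖(⟪S x.1, x.1⟫_ℂ : ℂ)‖ ^ 2) :=
        (Real.sqrt_sq (norm_nonneg _)).symm
    _ ≤ Real.sqrt (‖(⟪S x.1, x.1⟫_ℂ : ℂ)‖ ^ 2 + ‖S x.1‖ ^ 4) :=
        Real.sqrt_le_sqrt (le_add_of_nonneg_right (by positivity))
  -- ‖S‖^2 ≤ dwRadius
  have hS2_le_dw : ‖S‖ ^ 2 ≤ dwRadius S := by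
    have hnorm : ‖S‖ ≤ Real.sqrt (dwRadius S) := by
      apply S.opNorm_le_bound (Real.sqrt_nonneg _)
      intro x
      rcases eq_or_ne x 0 with rfl | hx
      · simp
      · have hxn : ‖x‖ ≠ 0 := norm_ne_zero_iff.mpr hx
        set u : H := ‖x‖⁻¹ • x with hu
        have hu1 : ‖u‖ = 1 := by
          rw [hu, norm_smul, norm_inv, norm_norm, inv_mul_cancel₀ hxn]
        have hSu2 : ‖S u‖ ^ 2 ≤ dwRadius S := by
          refine le_trans ?_ (hdwterm ⟨u, hu1⟩)
          rw [show ‖S u‖ ^ 2 = Real.sqrt ((‖S u‖ ^ 2) ^ 2) by rw [Real.sqrt_sq (by positivity)]]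
          apply Real.sqrt_le_sqrt
          rw [← pow_mul]
          norm_num
        have hSu : ‖S u‖ ≤ Real.sqrt (dwRadius S) := by
          rw [show ‖S u‖ = Real.sqrt (‖S u‖ ^ 2) by rw [Real.sqrt_sq (norm_nonneg _)]]
          exact Real.sqrt_le_sqrt hSu2
        have hSux : ‖S u‖ = ‖x‖⁻¹ * ‖S x‖ := by
          rw [hu, S.map_smul_of_tower, norm_smul, norm_inv, norm_norm]
        rw [hSux] at hSu
        calc ‖S x‖ = ‖x‖ * (‖x‖⁻¹ * ‖S x‖) := by field_simp
        _ ≤ ‖x‖ * Real.sqrt (dwRadius S) := by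
            apply mul_le_mul_of_nonneg_left hSu (norm_nonneg _)
        _ = Real.sqrt (dwRadius S) * ‖x‖ := mul_comm _ _
    have := pow_le_pow_left₀ (norm_nonneg S) hnorm 2
    rwa [Real.sq_sqrt hdw0] at this
  have h2 : dwRadius S ^ 2 ≥ max (numRadius S ^ 2) (‖S‖ ^ 4) := by
    apply max_le
    · exact pow_le_pow_left₀ hw0 hw_le_dw 2
    · calc ‖S‖ ^ 4 = (‖S‖ ^ 2) ^ 2 := by ring
      _ ≤ dwRadius S ^ 2 := pow_le_pow_left₀ (by positivity) hS2_le_dw 2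
  refine ⟨h1, h2, ?_, ?_⟩
  · rcases le_total (numRadius S ^ 2) (‖S‖ ^ 4) with h | h
    · rw [max_eq_right h, abs_of_nonpos (by linarith)]; ring
    · rw [max_eq_left h, abs_of_nonneg (by linarith)]; ring
  · have := abs_nonneg (numRadius S ^ 2 - ‖S‖ ^ 4)
    linarith
end

section
/- If S is a selfadjoint idempotent bounded linear operator on a complex Hilbert space (S = S* and S² = S), then dw(S) = √2 · w(S). -/
open scoped InnerProductSpace ComplexConjugate

variable {H : Type*} [NormedAddCommGroup H] [InnerProductSpace ℂ H] [CompleteSpace H]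

theorem dw_of_selfadjoint_idempotent (S : H →L[ℂ] H)
    (hsa : ContinuousLinearMap.adjoint S = S) (hidem : S ∘L S = S) :
    dwRadius S = Real.sqrt 2 * numRadius S := by
  have key : ∀ x : H, ‖(⟪S x, x⟫_ℂ : ℂ)‖ = ‖S x‖ ^ 2 := by
    intro x
    have h1 : (⟪S x, x⟫_ℂ : ℂ) = ⟪S x, S x⟫_ℂ := by
      conv_lhs => rw [← hidem]
      rw [ContinuousLinearMap.comp_apply, ← ContinuousLinearMap.adjoint_inner_right, hsa]
    rw [h1, inner_self_eq_norm_sq_to_K]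
    simp [Complex.norm_real, abs_of_nonneg (sq_nonneg ‖S x‖)]
  unfold dwRadius numRadius
  rw [Real.mul_iSup_of_nonneg (Real.sqrt_nonneg 2)]
  congr 1
  funext x
  rw [key x.1]
  rw [show (‖S x.1‖ ^ 2) ^ 2 + ‖S x.1‖ ^ 4 = 2 * (‖S x.1‖ ^ 2) ^ 2 by ring,
    Real.sqrt_mul (by norm_num), Real.sqrt_sq (sq_nonneg _)]
end

section
/- For every bounded linear operator S on a complex Hilbert space, every α ∈ [0,1], and every r ≥ 2, dw(S)^r ≤ (2^{r/2}/4)·‖|S|^{2rα} + |S*|^{2r(1−α)} + |S*S|^{2rα} + |S*S|^{2r(1−α)}‖. -/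
open scoped InnerProductSpace

variable {H : Type*} [NormedAddCommGroup H] [InnerProductSpace ℂ H] [CompleteSpace H]

noncomputable def opAbs (S : H →L[ℂ] H) : H →L[ℂ] H :=
  CFC.sqrt (ContinuousLinearMap.adjoint S * S)

/-!
Fix a unit vector `x` and put `a = |⟪S x, x⟫|`, `m = ‖S x‖² = ⟪S†S x, x⟫`. By convexity,
`(a² + m²)^(r/2) ≤ 2^(r/2-1) (a^r + m^r)`. Kato's mixed Schwarz inequality
`a² ≤ ⟪(S†S)^α x, x⟫ ⟪(SS†)^(1-α) x, x⟫`, the AM–GM inequality and McCarthy's inequality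
`⟪T x, x⟫^p ≤ ⟪T^p x, x⟫` (`T ≥ 0`, `p ≥ 1`) bound `a^r` by half the sum of the first two
operators of the theorem; McCarthy's inequality and the operator AM–GM inequality
`2 T^r ≤ T^(2rα) + T^(2r(1-α))` bound `m^r` by half the sum of the last two. It remains to bound
`⟪P x, x⟫ ≤ ‖P‖` and take the supremum over `x`.

Kato's inequality is proved by regularisation, writing
`S = (S (S†S + ε)^(-α/2)) (S†S + ε)^(α/2)` and using `S f(S†S) = f(SS†) S`.
-/

open scoped InnerProduct
open RCLike Polynomial Filter Topology

namespace Real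

theorem two_mul_le_add_of_sq_le_mul {a g h : ℝ} (hg : 0 ≤ g) (hh : 0 ≤ h) (hagh : a ^ 2 ≤ g * h) :
    2 * a ≤ g + h := by
  nlinarith [sq_nonneg (g - h), sq_nonneg (g + h - 2 * a)]

theorem rpow_le_add_div_two_of_sq_le_mul {a g h r : ℝ} (ha : 0 ≤ a) (hg : 0 ≤ g) (hh : 0 ≤ h)
    (hr : 0 ≤ r) (hagh : a ^ 2 ≤ g * h) : a ^ r ≤ (g ^ r + h ^ r) / 2 := by
  have : (a ^ r) ^ 2 ≤ g ^ r * h ^ r := by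
    rw [← mul_rpow hg hh, ← rpow_natCast, ← rpow_mul ha, mul_comm, rpow_mul ha, rpow_natCast]
    gcongr
  linarith [two_mul_le_add_of_sq_le_mul (rpow_nonneg hg r) (rpow_nonneg hh r) this]

theorem add_rpow_le_two_rpow_mul_add_rpow {u v p : ℝ} (hu : 0 ≤ u) (hv : 0 ≤ v) (hp : 1 ≤ p) :
    (u + v) ^ p ≤ 2 ^ (p - 1) * (u ^ p + v ^ p) := by
  exact_mod_cast NNReal.rpow_add_le_mul_rpow_add_rpow ⟨u, hu⟩ ⟨v, hv⟩ hp

theorem sqrt_sq_add_sq_rpow_le {a b r : ℝ} (ha : 0 ≤ a) (hb : 0 ≤ b) (hr : 2 ≤ r) :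
    √(a ^ 2 + b ^ 2) ^ r ≤ 2 ^ (r / 2 - 1) * (a ^ r + b ^ r) := by
  have sq_rpow : ∀ c : ℝ, 0 ≤ c → (c ^ 2) ^ (r / 2) = c ^ r := fun c hc => by
    rw [← rpow_natCast, ← rpow_mul hc]; ring_nf
  calc √(a ^ 2 + b ^ 2) ^ r = (a ^ 2 + b ^ 2) ^ (r / 2) := by
        rw [sqrt_eq_rpow, ← rpow_mul (by positivity)]; ring_nf
    _ ≤ 2 ^ (r / 2 - 1) * ((a ^ 2) ^ (r / 2) + (b ^ 2) ^ (r / 2)) :=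
        add_rpow_le_two_rpow_mul_add_rpow (by positivity) (by positivity) (by linarith)
    _ = 2 ^ (r / 2 - 1) * (a ^ r + b ^ r) := by rw [sq_rpow a ha, sq_rpow b hb]

theorem add_mul_sub_le_rpow {c t p : ℝ} (hc : 0 < c) (ht : 0 ≤ t) (hp : 1 ≤ p) :
    c ^ p + p * c ^ (p - 1) * (t - c) ≤ t ^ p := by
  have bernoulli := one_add_mul_self_le_rpow_one_add (s := t / c - 1)
    (by linarith [div_nonneg ht hc.le]) hp
  rw [add_sub_cancel, div_rpow ht hc.le, le_div_iff₀ (rpow_pos_of_pos hc p)] at bernoulli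
  calc c ^ p + p * c ^ (p - 1) * (t - c) = (1 + p * (t / c - 1)) * c ^ p := by
        rw [rpow_sub_one hc.ne']; field_simp
    _ ≤ t ^ p := bernoulli

theorem add_rpow_neg_mul_le {t e α : ℝ} (ht : 0 ≤ t) (he : 0 ≤ e) (hα : 0 ≤ α) :
    (t + e) ^ (-α) * t ≤ t ^ (1 - α) := by
  rcases ht.eq_or_lt with rfl | ht
  · simpa using rpow_nonneg le_rfl _
  calc (t + e) ^ (-α) * t ≤ t ^ (-α) * t :=
        mul_le_mul_of_nonneg_right (rpow_le_rpow_of_nonpos ht (by linarith) (by linarith)) ht.le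
    _ = t ^ (1 - α) := by rw [sub_eq_neg_add, rpow_add ht, rpow_one]

theorem iSup_rpow_le {ι : Sort*} {f : ι → ℝ} {r C : ℝ} (hf : ∀ i, 0 ≤ f i) (hr : 0 < r)
    (hC : 0 ≤ C) (h : ∀ i, f i ^ r ≤ C) : (⨆ i, f i) ^ r ≤ C :=
  (le_rpow_inv_iff_of_pos (iSup_nonneg hf) hC hr).1 <|
    Real.iSup_le (fun i => (le_rpow_inv_iff_of_pos (hf i) hC hr).2 (h i)) (by positivity)

end Real

theorem SemiconjBy.aeval {R A : Type*} [CommSemiring R] [Semiring A] [Algebra R A] {a b c : A}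
    (h : SemiconjBy c a b) (p : R[X]) : SemiconjBy c (aeval a p) (aeval b p) := by
  induction p using Polynomial.induction_on' with
  | add p q hp hq => simpa only [map_add] using hp.add_right hq
  | monomial n r =>
    simp only [aeval_monomial]
    exact SemiconjBy.mul_right (Algebra.commutes r c).symm (h.pow_right n)

section

variable {A : Type*} [Ring A] [StarRing A] [Algebra ℝ A] [TopologicalSpace A]
  [IsTopologicalRing A] [T2Space A] [ContinuousFunctionalCalculus ℝ A IsSelfAdjoint]

/- Approximate `f` uniformly on `spectrum ℝ a ∪ spectrum ℝ b` by polynomials (Stone–Weierstrass),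
for which the claim is `SemiconjBy.aeval`, and pass to the limit with `tendsto_cfc_fun`. -/
theorem SemiconjBy.cfc_real {a b c : A} (h : SemiconjBy c a b) {f : ℝ → ℝ}
    (hfa : ContinuousOn f (spectrum ℝ a)) (hfb : ContinuousOn f (spectrum ℝ b))
    (ha : IsSelfAdjoint a) (hb : IsSelfAdjoint b) :
    SemiconjBy c (cfc f a) (cfc f b) := by
  set K := spectrum ℝ a ∪ spectrum ℝ b
  have hKa := ContinuousFunctionalCalculus.isCompact_spectrum (R := ℝ) a
  have hKb := ContinuousFunctionalCalculus.isCompact_spectrum (R := ℝ) b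
  have : CompactSpace K := isCompact_iff_compactSpace.mp (hKa.union hKb)
  have hfK : ContinuousOn f K := hfa.union_of_isClosed hfb hKa.isClosed hKb.isClosed
  have hf_mem : (⟨K.domRestrict f, hfK.domRestrict⟩ : C(K, ℝ)) ∈
      closure (polynomialFunctions K : Set C(K, ℝ)) := by
    rw [← Subalgebra.topologicalClosure_coe, polynomialFunctions.topologicalClosure]
    trivial
  obtain ⟨g, hg_poly, hg⟩ := mem_closure_iff_seq_limit.mp hf_mem
  simp only [polynomialFunctions_coe, Set.mem_range] at hg_poly
  choose p hp using hg_poly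
  have hunif : TendstoUniformlyOn (fun n t => (p n).eval t) f atTop K := by
    rw [tendstoUniformlyOn_iff_tendstoUniformly_comp_coe]
    have := ContinuousMap.tendsto_iff_tendstoUniformly.mp hg
    simp only [← hp] at this
    exact this
  have hlim : ∀ d : A, spectrum ℝ d ⊆ K → IsSelfAdjoint d →
      Tendsto (fun n => Polynomial.aeval d (p n)) atTop (𝓝 (cfc f d)) := fun d hd hsa =>
    (tendsto_cfc_fun (hunif.mono hd) (.of_forall fun n => (p n).continuousOn)).congr
      fun n => cfc_polynomial (p n) d hsa
  exact tendsto_nhds_unique ((hlim a Set.subset_union_left ha).const_mul c)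
    (((hlim b Set.subset_union_right hb).mul_const c).congr fun n => (h.aeval (p n)).eq.symm)

end

section

variable {A : Type*} [CStarAlgebra A] [PartialOrder A] [StarOrderedRing A]

theorem CFC.two_smul_rpow_le_rpow_add_rpow {a : A} (ha : 0 ≤ a) {s t : ℝ} (hs : 0 ≤ s)
    (ht : 0 ≤ t) : (2 : ℝ) • a ^ ((s + t) / 2) ≤ a ^ s + a ^ t := by
  have hcont : ∀ y : ℝ, 0 ≤ y → ContinuousOn (fun u : ℝ => u ^ y) (spectrum ℝ a) := fun y hy =>
    (Real.continuous_rpow_const hy).continuousOn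
  rw [CFC.rpow_eq_cfc_real ha, CFC.rpow_eq_cfc_real ha, CFC.rpow_eq_cfc_real ha,
    ← cfc_smul _ _ a (hcont _ (by positivity)), ← cfc_add (a := a) _ _ (hcont s hs) (hcont t ht)]
  refine cfc_mono (fun u hu => ?_) ((hcont ((s + t) / 2) (by positivity)).const_smul (2 : ℝ))
    ((hcont s hs).add (hcont t ht))
  have hu : 0 ≤ u := spectrum_nonneg_of_nonneg ha hu
  refine Real.two_mul_le_add_of_sq_le_mul (Real.rpow_nonneg hu s) (Real.rpow_nonneg hu t) ?_
  rw [← Real.rpow_natCast, ← Real.rpow_mul hu, ← Real.rpow_add_of_nonneg hu hs ht]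
  norm_num

end

namespace ContinuousLinearMap

section InnerProductSpace

variable {E : Type*} [NormedAddCommGroup E] [InnerProductSpace ℂ E]

theorem re_inner_apply_le_of_le {T U : E →L[ℂ] E} (h : T ≤ U) (x : E) :
    re ⟪T x, x⟫_ℂ ≤ re ⟪U x, x⟫_ℂ := by
  have := ((le_def T U).mp h).re_inner_nonneg_left x
  rw [sub_apply, inner_sub_left, map_sub] at this
  linarith

theorem re_inner_apply_le_opNorm (T : E →L[ℂ] E) {x : E} (hx : ‖x‖ = 1) :
    re ⟪T x, x⟫_ℂ ≤ ‖T‖ :=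
  calc re ⟪T x, x⟫_ℂ ≤ ‖T x‖ * ‖x‖ := re_inner_le_norm _ _
    _ ≤ ‖T‖ := by simpa [hx] using T.le_opNorm x

theorem re_inner_add_algebraMap_apply (T : E →L[ℂ] E) (γ : ℝ) (x : E) :
    re ⟪(T + algebraMap ℝ (E →L[ℂ] E) γ) x, x⟫_ℂ = re ⟪T x, x⟫_ℂ + γ * ‖x‖ ^ 2 := by
  simp [Algebra.algebraMap_eq_smul_one, inner_self_eq_norm_sq_to_K, ← Complex.ofReal_pow]

theorem re_inner_add_apply (T U : E →L[ℂ] E) (x : E) :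
    re ⟪(T + U) x, x⟫_ℂ = re ⟪T x, x⟫_ℂ + re ⟪U x, x⟫_ℂ := by
  simp

theorem re_inner_smul_apply (T : E →L[ℂ] E) (β : ℝ) (x : E) :
    re ⟪(β • T) x, x⟫_ℂ = β * re ⟪T x, x⟫_ℂ := by
  simp

end InnerProductSpace

variable {E : Type*} [NormedAddCommGroup E] [InnerProductSpace ℂ E] [CompleteSpace E]

theorem adjoint_mul_self_nonneg (S : E →L[ℂ] E) : 0 ≤ S† * S := by
  simpa only [star_eq_adjoint] using star_mul_self_nonneg S

theorem mul_adjoint_self_nonneg (S : E →L[ℂ] E) : 0 ≤ S * S† := by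
  simpa only [star_eq_adjoint] using mul_star_self_nonneg S

theorem re_inner_rpow_le {T : E →L[ℂ] E} (hT : 0 ≤ T) {x : E} (hx : ‖x‖ = 1) {p : ℝ}
    (hp : 1 ≤ p) : (re ⟪T x, x⟫_ℂ) ^ p ≤ re ⟪(T ^ p) x, x⟫_ℂ := by
  set c := re ⟪T x, x⟫_ℂ
  have hTsa : IsSelfAdjoint T := hT.isSelfAdjoint
  have hc : 0 ≤ c := (nonneg_iff_isPositive T).mp hT |>.re_inner_nonneg_left x
  rcases hc.eq_or_lt with hc | hc
  · rw [← hc, Real.zero_rpow (by linarith)]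
    exact ((nonneg_iff_isPositive _).mp CFC.rpow_nonneg).re_inner_nonneg_left x
  -- `T ^ p` lies above the tangent line of `t ↦ t ^ p` at `c`, evaluated at `T`
  have tangent : cfc (fun t : ℝ => p * c ^ (p - 1) * t + (c ^ p - p * c ^ (p - 1) * c)) T
      ≤ T ^ p := by
    rw [CFC.rpow_eq_cfc_real hT]
    refine cfc_mono (fun t ht => ?_) (hg := (Real.continuous_rpow_const (by linarith)).continuousOn)
    linarith [Real.add_mul_sub_le_rpow hc (spectrum_nonneg_of_nonneg hT ht) hp]
  have := re_inner_apply_le_of_le tangent x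
  rw [cfc_add_const _ (p * c ^ (p - 1) * ·) T, cfc_const_mul_id _ T,
    re_inner_add_algebraMap_apply, re_inner_smul_apply, hx] at this
  linarith

section Regularization

variable {ε : ℝ}

theorem continuousOn_add_rpow_spectrum {T : E →L[ℂ] E} (hT : 0 ≤ T) (hε : 0 < ε) (y : ℝ) :
    ContinuousOn (fun t : ℝ => (t + ε) ^ y) (spectrum ℝ T) :=
  ContinuousOn.rpow_const (by fun_prop) fun t ht =>
    Or.inl (by linarith [spectrum_nonneg_of_nonneg hT ht])

theorem cfc_add_rpow_mul_cfc_add_rpow {T : E →L[ℂ] E} (hT : 0 ≤ T) (hε : 0 < ε) (y z : ℝ) :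
    cfc (fun t : ℝ => (t + ε) ^ y) T * cfc (fun t : ℝ => (t + ε) ^ z) T
      = cfc (fun t : ℝ => (t + ε) ^ (y + z)) T := by
  rw [← cfc_mul _ _ T (continuousOn_add_rpow_spectrum hT hε y)
    (continuousOn_add_rpow_spectrum hT hε z)]
  refine cfc_congr fun t ht => ?_
  rw [Real.rpow_add (by linarith [spectrum_nonneg_of_nonneg hT ht])]

theorem norm_cfc_add_rpow_half_apply_sq_le {T : E →L[ℂ] E} (hT : 0 ≤ T) (hε : 0 < ε) {α : ℝ}
    (hα0 : 0 ≤ α) (hα1 : α ≤ 1) (x : E) :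
    ‖cfc (fun t : ℝ => (t + ε) ^ (α / 2)) T x‖ ^ 2 ≤ re ⟪(T ^ α) x, x⟫_ℂ + ε ^ α * ‖x‖ ^ 2 := by
  set u := cfc (fun t : ℝ => (t + ε) ^ (α / 2)) T
  have hle : u * u ≤ T ^ α + algebraMap ℝ _ (ε ^ α) := by
    rw [cfc_add_rpow_mul_cfc_add_rpow hT hε, add_halves, CFC.rpow_eq_cfc_real hT,
      ← cfc_add_const _ _ T (Real.continuous_rpow_const hα0).continuousOn hT.isSelfAdjoint]
    exact cfc_mono (fun t ht => Real.rpow_add_le_add_rpow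
      (spectrum_nonneg_of_nonneg hT ht) hε.le hα0 hα1) (continuousOn_add_rpow_spectrum hT hε α)
      ((Real.continuous_rpow_const hα0).add continuous_const).continuousOn
  have hsa : u† = u := by
    rw [← star_eq_adjoint]; exact (cfc_predicate _ _ : IsSelfAdjoint u).star_eq
  rw [apply_norm_sq_eq_inner_adjoint_left, hsa, ← re_inner_add_algebraMap_apply]
  exact re_inner_apply_le_of_le hle x

/- `S (S†S + ε)^(-α) S† = (SS† + ε)^(-α) SS†` by intertwining, and `(t + ε)^(-α) t ≤ t^(1-α)`. -/
theorem norm_adjoint_mul_cfc_add_rpow_neg_half_apply_sq_le (S : E →L[ℂ] E) (hε : 0 < ε) {α : ℝ}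
    (hα0 : 0 ≤ α) (hα1 : α ≤ 1) (x : E) :
    ‖((S * cfc (fun t : ℝ => (t + ε) ^ (-(α / 2))) (S† * S))†) x‖ ^ 2
      ≤ re ⟪((S * S†) ^ (1 - α)) x, x⟫_ℂ := by
  set A := S† * S
  set B := S * S†
  have hA : 0 ≤ A := adjoint_mul_self_nonneg S
  have hB : 0 ≤ B := mul_adjoint_self_nonneg S
  set v := cfc (fun t : ℝ => (t + ε) ^ (-(α / 2))) A
  have hsa : star v = v := (cfc_predicate _ _ : IsSelfAdjoint v).star_eq
  have hsemi : SemiconjBy S A B := by simp only [SemiconjBy, A, B, mul_assoc]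
  have hle : S * v * (S * v)† ≤ B ^ (1 - α) := calc
    S * v * (S * v)† = S * (v * v) * S† := by
      rw [← star_eq_adjoint, star_mul, hsa, star_eq_adjoint]; simp only [mul_assoc]
    _ = cfc (fun t : ℝ => (t + ε) ^ (-α)) B * B := by
      rw [cfc_add_rpow_mul_cfc_add_rpow hA hε, ← neg_add, add_halves,
        (hsemi.cfc_real (continuousOn_add_rpow_spectrum hA hε _)
          (continuousOn_add_rpow_spectrum hB hε _) hA.isSelfAdjoint hB.isSelfAdjoint).eq,
        mul_assoc]
    _ = cfc (fun t : ℝ => (t + ε) ^ (-α) * t) B := by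
      rw [cfc_mul _ _ B (continuousOn_add_rpow_spectrum hB hε _) (by fun_prop),
        cfc_id' ℝ B hB.isSelfAdjoint]
    _ ≤ B ^ (1 - α) := by
      rw [CFC.rpow_eq_cfc_real hB]
      exact cfc_mono (fun t ht => Real.add_rpow_neg_mul_le
          (spectrum_nonneg_of_nonneg hB ht) hε.le hα0)
        ((continuousOn_add_rpow_spectrum hB hε _).mul (by fun_prop))
        ((Real.continuous_rpow_const (by linarith)).continuousOn)
  rw [apply_norm_sq_eq_inner_adjoint_left, adjoint_adjoint]
  exact re_inner_apply_le_of_le hle x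

theorem norm_inner_sq_le_of_pos (S : E →L[ℂ] E) (hε : 0 < ε) {α : ℝ} (hα0 : 0 ≤ α)
    (hα1 : α ≤ 1) (x : E) :
    ‖⟪S x, x⟫_ℂ‖ ^ 2 ≤
      (re ⟪((S† * S) ^ α) x, x⟫_ℂ + ε ^ α * ‖x‖ ^ 2) * re ⟪((S * S†) ^ (1 - α)) x, x⟫_ℂ := by
  have hA := adjoint_mul_self_nonneg S
  set u := cfc (fun t : ℝ => (t + ε) ^ (α / 2)) (S† * S)
  set w := S * cfc (fun t : ℝ => (t + ε) ^ (-(α / 2))) (S† * S)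
  have hS : w * u = S := by
    rw [mul_assoc, cfc_add_rpow_mul_cfc_add_rpow hA hε, neg_add_cancel]
    simp only [Real.rpow_zero, cfc_const_one ℝ _ hA.isSelfAdjoint, mul_one]
  have hu := norm_cfc_add_rpow_half_apply_sq_le hA hε hα0 hα1 x
  have hw := norm_adjoint_mul_cfc_add_rpow_neg_half_apply_sq_le S hε hα0 hα1 x
  have hinner : ⟪S x, x⟫_ℂ = ⟪u x, (w†) x⟫_ℂ := by
    rw [adjoint_inner_right, ← hS]; rfl
  calc ‖⟪S x, x⟫_ℂ‖ ^ 2 ≤ (‖u x‖ * ‖(w†) x‖) ^ 2 := by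
        rw [hinner]; gcongr; exact norm_inner_le_norm _ _
    _ = ‖u x‖ ^ 2 * ‖(w†) x‖ ^ 2 := mul_pow _ _ _
    _ ≤ _ := mul_le_mul hu hw (sq_nonneg _) ((sq_nonneg _).trans hu)

end Regularization

theorem norm_inner_sq_le_mixed_schwarz (S : E →L[ℂ] E) {α : ℝ} (hα0 : 0 ≤ α) (hα1 : α ≤ 1)
    (x : E) :
    ‖⟪S x, x⟫_ℂ‖ ^ 2 ≤ re ⟪((S† * S) ^ α) x, x⟫_ℂ * re ⟪((S * S†) ^ (1 - α)) x, x⟫_ℂ := by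
  -- let `ε → 0⁺` in `norm_inner_sq_le_of_pos`; for `α = 0` the error term `ε ^ α = 1` does not
  -- vanish, but then the claim is the Cauchy–Schwarz inequality `|⟪x, S† x⟫| ≤ ‖x‖ ‖S† x‖`
  rcases hα0.eq_or_lt with rfl | hα
  · have hB : re ⟪(S * S†) x, x⟫_ℂ = ‖(S†) x‖ ^ 2 := by
      rw [apply_norm_sq_eq_inner_adjoint_left, adjoint_adjoint]; rfl
    rw [CFC.rpow_zero _ (adjoint_mul_self_nonneg S), sub_zero,
      CFC.rpow_one _ (mul_adjoint_self_nonneg S), hB, one_apply_eq_self,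
      inner_self_eq_norm_sq, ← mul_pow, ← adjoint_inner_right]
    gcongr
    exact norm_inner_le_norm _ _
  have hlim : Tendsto (fun ε : ℝ => (re ⟪((S† * S) ^ α) x, x⟫_ℂ + ε ^ α * ‖x‖ ^ 2)
      * re ⟪((S * S†) ^ (1 - α)) x, x⟫_ℂ) (𝓝[>] 0)
      (𝓝 (re ⟪((S† * S) ^ α) x, x⟫_ℂ * re ⟪((S * S†) ^ (1 - α)) x, x⟫_ℂ)) := by
    have : Tendsto (fun ε : ℝ => ε ^ α) (𝓝[>] 0) (𝓝 0) := by
      simpa [Real.zero_rpow hα.ne'] using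
        ((Real.continuous_rpow_const hα.le).tendsto 0).mono_left nhdsWithin_le_nhds
    simpa using ((this.mul_const (‖x‖ ^ 2)).const_add _).mul_const _
  exact ge_of_tendsto hlim (eventually_nhdsWithin_of_forall fun ε hε =>
    norm_inner_sq_le_of_pos S hε hα0 hα1 x)

theorem re_inner_rpow_rpow_le {T : E →L[ℂ] E} (hT : 0 ≤ T) {x : E} (hx : ‖x‖ = 1) {e p : ℝ}
    (he : 0 ≤ e) (hp : 1 ≤ p) : (re ⟪(T ^ e) x, x⟫_ℂ) ^ p ≤ re ⟪(T ^ (p * e)) x, x⟫_ℂ := by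
  rw [mul_comm, ← CFC.rpow_rpow_of_exponent_nonneg _ _ _ he (by linarith) hT]
  exact re_inner_rpow_le CFC.rpow_nonneg hx hp

theorem re_inner_apply_rpow_le {T : E →L[ℂ] E} (hT : 0 ≤ T) {x : E} (hx : ‖x‖ = 1) {α r : ℝ}
    (hα0 : 0 ≤ α) (hα1 : α ≤ 1) (hr : 1 ≤ r) :
    (re ⟪T x, x⟫_ℂ) ^ r ≤
      (re ⟪(T ^ (2 * r * α)) x, x⟫_ℂ + re ⟪(T ^ (2 * r * (1 - α))) x, x⟫_ℂ) / 2 := by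
  have amgm := re_inner_apply_le_of_le (CFC.two_smul_rpow_le_rpow_add_rpow hT
    (s := 2 * r * α) (t := 2 * r * (1 - α)) (by positivity)
    (mul_nonneg (by positivity) (by linarith))) x
  rw [show (2 * r * α + 2 * r * (1 - α)) / 2 = r by ring, re_inner_smul_apply,
    re_inner_add_apply] at amgm
  linarith [re_inner_rpow_le hT hx hr]

theorem norm_inner_rpow_le (S : E →L[ℂ] E) {x : E} (hx : ‖x‖ = 1) {α r : ℝ} (hα0 : 0 ≤ α)
    (hα1 : α ≤ 1) (hr : 1 ≤ r) :
    ‖⟪S x, x⟫_ℂ‖ ^ r ≤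
      (re ⟪((S† * S) ^ (r * α)) x, x⟫_ℂ + re ⟪((S * S†) ^ (r * (1 - α))) x, x⟫_ℂ) / 2 := by
  have hre : ∀ {T : E →L[ℂ] E}, 0 ≤ T → 0 ≤ re ⟪T x, x⟫_ℂ := fun hT =>
    ((nonneg_iff_isPositive _).mp hT).re_inner_nonneg_left x
  refine (Real.rpow_le_add_div_two_of_sq_le_mul (norm_nonneg _) (hre CFC.rpow_nonneg)
    (hre CFC.rpow_nonneg) (by linarith) (norm_inner_sq_le_mixed_schwarz S hα0 hα1 x)).trans ?_
  linarith [re_inner_rpow_rpow_le (adjoint_mul_self_nonneg S) hx hα0 hr,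
    re_inner_rpow_rpow_le (mul_adjoint_self_nonneg S) hx (sub_nonneg.2 hα1) hr]

theorem sqrt_norm_inner_sq_add_norm_pow_four_rpow_le (S : E →L[ℂ] E) {α r : ℝ} (hα0 : 0 ≤ α)
    (hα1 : α ≤ 1) (hr : 2 ≤ r) {x : E} (hx : ‖x‖ = 1) :
    √(‖⟪S x, x⟫_ℂ‖ ^ 2 + ‖S x‖ ^ 4) ^ r ≤ 2 ^ (r / 2) / 4 *
      re ⟪((S† * S) ^ (r * α) + (S * S†) ^ (r * (1 - α)) + (S† * S) ^ (2 * r * α)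
        + (S† * S) ^ (2 * r * (1 - α))) x, x⟫_ℂ := by
  have hm : ‖S x‖ ^ 2 = re ⟪(S† * S) x, x⟫_ℂ := by
    rw [apply_norm_sq_eq_inner_adjoint_left]; rfl
  have h_inner := norm_inner_rpow_le S hx hα0 hα1 (r := r) (by linarith)
  have h_norm := re_inner_apply_rpow_le (adjoint_mul_self_nonneg S) hx hα0 hα1 (r := r)
    (by linarith)
  rw [← hm] at h_norm
  calc √(‖⟪S x, x⟫_ℂ‖ ^ 2 + ‖S x‖ ^ 4) ^ r = √(‖⟪S x, x⟫_ℂ‖ ^ 2 + (‖S x‖ ^ 2) ^ 2) ^ r := by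
        ring_nf
    _ ≤ 2 ^ (r / 2 - 1) * (‖⟪S x, x⟫_ℂ‖ ^ r + (‖S x‖ ^ 2) ^ r) :=
        Real.sqrt_sq_add_sq_rpow_le (norm_nonneg _) (sq_nonneg _) hr
    _ ≤ 2 ^ (r / 2 - 1) * ((re ⟪((S† * S) ^ (r * α)) x, x⟫_ℂ
          + re ⟪((S * S†) ^ (r * (1 - α))) x, x⟫_ℂ) / 2 + (re ⟪((S† * S) ^ (2 * r * α)) x, x⟫_ℂ
          + re ⟪((S† * S) ^ (2 * r * (1 - α))) x, x⟫_ℂ) / 2) := by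
        gcongr
    _ = _ := by
        rw [Real.rpow_sub_one two_ne_zero]
        simp only [re_inner_add_apply]
        ring

end ContinuousLinearMap

theorem opAbs_rpow (S : H →L[ℂ] H) {y : ℝ} (hy : 0 ≤ y) :
    opAbs S ^ y = (S† * S) ^ (y / 2) := by
  rw [opAbs, CFC.sqrt_eq_rpow, CFC.rpow_rpow_of_exponent_nonneg _ _ _ (by norm_num) hy
    (ContinuousLinearMap.adjoint_mul_self_nonneg S)]
  ring_nf

open ContinuousLinearMap in
theorem dw_rpow_bound (S : H →L[ℂ] H) (α r : ℝ) (hα : α ∈ Set.Icc (0 : ℝ) 1) (hr : 2 ≤ r) :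
    dwRadius S ^ r ≤ (2 ^ (r / 2) / 4) *
      ‖CFC.rpow (opAbs S) (2 * r * α)
        + CFC.rpow (opAbs (ContinuousLinearMap.adjoint S)) (2 * r * (1 - α))
        + CFC.rpow (ContinuousLinearMap.adjoint S * S) (2 * r * α)
        + CFC.rpow (ContinuousLinearMap.adjoint S * S) (2 * r * (1 - α))‖ := by
  obtain ⟨hα0, hα1⟩ := hα
  rw [dwRadius]
  simp only [CFC.rpow_eq_pow]
  rw [opAbs_rpow S (by positivity), opAbs_rpow (S†) (mul_nonneg (by positivity) (by linarith)),
    adjoint_adjoint, show 2 * r * α / 2 = r * α by ring,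
    show 2 * r * (1 - α) / 2 = r * (1 - α) by ring]
  refine Real.iSup_rpow_le (fun x => Real.sqrt_nonneg _) (by linarith) (by positivity) fun x => ?_
  exact (sqrt_norm_inner_sq_add_norm_pow_four_rpow_le S hα0 hα1 hr x.2).trans
    (mul_le_mul_of_nonneg_left (re_inner_apply_le_opNorm _ x.2) (by positivity))
end

section
/- For every bounded linear operator S on a complex Hilbert space, every α ∈ [0,1], and every r ≥ 1, dw(S)^{2r} ≤ 2^{r−1}·‖α|S|^{2r} + (1−α)|S*|^{2r} + |S*S|^{2r}‖. -/
open scoped InnerProductSpace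

variable {H : Type*} [NormedAddCommGroup H] [InnerProductSpace ℂ H] [CompleteSpace H]

/-!
For a unit vector `x` put `w = |⟨Sx, x⟩|²`, `u = ‖Sx‖²`, `v = ‖S*x‖²`. Cauchy–Schwarz gives
`w ≤ min u v`, hence `w ^ r ≤ α u ^ r + (1 - α) v ^ r`, and convexity of `t ↦ t ^ r` gives
`(w + u²) ^ r ≤ 2 ^ (r - 1) (w ^ r + u ^ (2r))`. The Hölder–McCarthy inequality
`⟨Ax, x⟩ ^ p ≤ ⟨A ^ p x, x⟩` (`A ≥ 0`, `p ≥ 1`; apply the functional calculus to a tangent line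
of `t ↦ t ^ p`) bounds `u ^ r`, `v ^ r`, `u ^ (2r)` by `⟨|S| ^ (2r) x, x⟩`, `⟨|S*| ^ (2r) x, x⟩`,
`⟨|S| ^ (4r) x, x⟩`, and the resulting quadratic form is at most the norm of the operator.
-/

open ContinuousLinearMap RCLike

theorem Real.rpow_add_le_mul_rpow_add_rpow {a b p : ℝ} (ha : 0 ≤ a) (hb : 0 ≤ b) (hp : 1 ≤ p) :
    (a + b) ^ p ≤ 2 ^ (p - 1) * (a ^ p + b ^ p) := by
  lift a to NNReal using ha
  lift b to NNReal using hb
  exact_mod_cast NNReal.rpow_add_le_mul_rpow_add_rpow a b hp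

theorem rpow_add_mul_rpow_sub_one_mul_sub_le_rpow {s t p : ℝ} (hs : 0 < s) (ht : 0 ≤ t)
    (hp : 1 ≤ p) : s ^ p + p * s ^ (p - 1) * (t - s) ≤ t ^ p := by
  have hsp : 0 < s ^ p := Real.rpow_pos_of_pos hs p
  have bernoulli := one_add_mul_self_le_rpow_one_add (s := t / s - 1)
    (by linarith [div_nonneg ht hs.le]) hp
  rw [add_sub_cancel, Real.div_rpow ht hs.le, le_div_iff₀ hsp] at bernoulli
  calc s ^ p + p * s ^ (p - 1) * (t - s) = (1 + p * (t / s - 1)) * s ^ p := by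
        rw [Real.rpow_sub_one hs.ne']; field_simp
    _ ≤ t ^ p := bernoulli

section InnerProduct

variable {𝕜 E : Type*} [RCLike 𝕜] [NormedAddCommGroup E] [InnerProductSpace 𝕜 E]

theorem re_inner_le_opNorm_mul_sq (T : E →L[𝕜] E) (x : E) :
    re ⟪T x, x⟫_𝕜 ≤ ‖T‖ * ‖x‖ ^ 2 :=
  calc re ⟪T x, x⟫_𝕜 ≤ ‖T x‖ * ‖x‖ := re_inner_le_norm _ _
    _ ≤ ‖T‖ * ‖x‖ * ‖x‖ := by gcongr; exact T.le_opNorm x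
    _ = ‖T‖ * ‖x‖ ^ 2 := by ring

theorem re_inner_le_re_inner_of_le {T T' : E →L[𝕜] E} (h : T ≤ T') (x : E) :
    re ⟪T x, x⟫_𝕜 ≤ re ⟪T' x, x⟫_𝕜 := by
  have := ((le_def T T').1 h).re_inner_nonneg_left x
  rwa [sub_apply, inner_sub_left, map_sub, sub_nonneg] at this

theorem re_inner_nonneg_of_nonneg {T : E →L[𝕜] E} (h : 0 ≤ T) (x : E) : 0 ≤ re ⟪T x, x⟫_𝕜 := by
  simpa using re_inner_le_re_inner_of_le h x

theorem norm_inner_apply_rpow_le [CompleteSpace E] (S : E →L[𝕜] E) {α p : ℝ} (hα0 : 0 ≤ α)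
    (hα1 : α ≤ 1) (hp : 0 ≤ p) {x : E} (hx : ‖x‖ = 1) :
    ‖⟪S x, x⟫_𝕜‖ ^ p ≤ α * ‖S x‖ ^ p + (1 - α) * ‖adjoint S x‖ ^ p := by
  have h₁ : ‖⟪S x, x⟫_𝕜‖ ≤ ‖S x‖ := by
    simpa [hx] using norm_inner_le_norm (𝕜 := 𝕜) (S x) x
  have h₂ : ‖⟪S x, x⟫_𝕜‖ ≤ ‖adjoint S x‖ := by
    simpa [hx, adjoint_inner_right] using norm_inner_le_norm (𝕜 := 𝕜) x (adjoint S x)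
  have := Real.rpow_le_rpow (norm_nonneg _) h₁ hp
  have := Real.rpow_le_rpow (norm_nonneg _) h₂ hp
  nlinarith

end InnerProduct

theorem affine_add_re_inner_le_re_inner_cfc {A : H →L[ℂ] H} (hA : IsSelfAdjoint A) {f : ℝ → ℝ}
    (hf : ContinuousOn f (spectrum ℝ A)) {b c : ℝ} (hbc : ∀ t ∈ spectrum ℝ A, b + c * t ≤ f t)
    {x : H} (hx : ‖x‖ = 1) : b + c * re ⟪A x, x⟫_ℂ ≤ re ⟪cfc f A x, x⟫_ℂ := by
  have hmono : cfc (fun t : ℝ => b + c * t) A ≤ cfc f A := cfc_mono hbc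
  rw [cfc_add .., cfc_const b A, cfc_const_mul_id c A] at hmono
  have := re_inner_le_re_inner_of_le hmono x
  simpa [Algebra.algebraMap_eq_smul_one, inner_add_left, inner_smul_left_eq_smul, hx] using this

theorem rpow_re_inner_le_re_inner_rpow {A : H →L[ℂ] H} (hA : 0 ≤ A) {p : ℝ} (hp : 1 ≤ p)
    {x : H} (hx : ‖x‖ = 1) : re ⟪A x, x⟫_ℂ ^ p ≤ re ⟪CFC.rpow A p x, x⟫_ℂ := by
  set s := re ⟪A x, x⟫_ℂ
  rcases (re_inner_nonneg_of_nonneg hA x : 0 ≤ s).eq_or_lt with hs | hs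
  · rw [show s = 0 from hs.symm, Real.zero_rpow (by linarith)]
    exact re_inner_nonneg_of_nonneg CFC.rpow_nonneg x
  · set c := p * s ^ (p - 1)
    have tangent : ∀ t ∈ spectrum ℝ A, (s ^ p - c * s) + c * t ≤ t ^ p := fun t ht => by
      linarith [rpow_add_mul_rpow_sub_one_mul_sub_le_rpow hs (spectrum_nonneg_of_nonneg hA ht) hp]
    have hcont : ContinuousOn (fun t : ℝ => t ^ p) (spectrum ℝ A) :=
      (Real.continuous_rpow_const (by linarith)).continuousOn
    have := affine_add_re_inner_le_re_inner_cfc hA.isSelfAdjoint hcont tangent hx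
    rw [CFC.rpow_eq_pow, CFC.rpow_eq_cfc_real hA]
    linarith

theorem rpow_opAbs_two_mul (S : H →L[ℂ] H) {p : ℝ} (hp : 0 ≤ p) :
    CFC.rpow (opAbs S) (2 * p) = CFC.rpow (adjoint S * S) p := by
  have hS : 0 ≤ adjoint S * S := star_mul_self_nonneg S
  rw [opAbs, CFC.sqrt_eq_rpow, CFC.rpow_eq_pow, CFC.rpow_eq_pow,
    CFC.rpow_rpow_of_exponent_nonneg _ _ _ (by norm_num) (by linarith) hS]
  ring_nf

theorem norm_apply_rpow_le_re_inner_rpow (S : H →L[ℂ] H) {p : ℝ} (hp : 1 ≤ p) {x : H}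
    (hx : ‖x‖ = 1) : ‖S x‖ ^ (2 * p) ≤ re ⟪CFC.rpow (adjoint S * S) p x, x⟫_ℂ := by
  have hSx : re ⟪(adjoint S * S) x, x⟫_ℂ = ‖S x‖ ^ 2 :=
    (apply_norm_sq_eq_inner_adjoint_left S x).symm
  have := rpow_re_inner_le_re_inner_rpow (A := adjoint S * S) (star_mul_self_nonneg S) hp hx
  rwa [hSx, ← Real.rpow_natCast, ← Real.rpow_mul (norm_nonneg _)] at this

omit [CompleteSpace H] in
theorem dwRadius_rpow_le (S : H →L[ℂ] H) {p M : ℝ} (hp : 0 < p) (hM : 0 ≤ M)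
    (h : ∀ x : H, ‖x‖ = 1 → (‖⟪S x, x⟫_ℂ‖ ^ 2 + ‖S x‖ ^ 4) ^ p ≤ M) :
    dwRadius S ^ (2 * p) ≤ M := by
  have hd : dwRadius S ≤ M ^ (2 * p)⁻¹ := by
    refine Real.iSup_le (fun x => ?_) (by positivity)
    have hq : 0 ≤ ‖⟪S x.1, x.1⟫_ℂ‖ ^ 2 + ‖S x.1‖ ^ 4 := by positivity
    calc √(‖⟪S x.1, x.1⟫_ℂ‖ ^ 2 + ‖S x.1‖ ^ 4)
        = ((‖⟪S x.1, x.1⟫_ℂ‖ ^ 2 + ‖S x.1‖ ^ 4) ^ p) ^ (2 * p)⁻¹ := by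
          rw [Real.sqrt_eq_rpow, ← Real.rpow_mul hq]; field_simp
      _ ≤ M ^ (2 * p)⁻¹ := by gcongr; exact h x.1 x.2
  have hd0 : 0 ≤ dwRadius S := Real.iSup_nonneg fun _ => Real.sqrt_nonneg _
  calc dwRadius S ^ (2 * p) ≤ (M ^ (2 * p)⁻¹) ^ (2 * p) := by gcongr
    _ = M := Real.rpow_inv_rpow hM (by positivity)

theorem inner_sq_add_norm_pow_four_rpow_le (S : H →L[ℂ] H) {α r : ℝ} (hα0 : 0 ≤ α) (hα1 : α ≤ 1)
    (hr : 1 ≤ r) {x : H} (hx : ‖x‖ = 1) :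
    (‖⟪S x, x⟫_ℂ‖ ^ 2 + ‖S x‖ ^ 4) ^ r ≤ 2 ^ (r - 1) *
      re ⟪(α • CFC.rpow (adjoint S * S) r + (1 - α) • CFC.rpow (adjoint (adjoint S) * adjoint S) r
        + CFC.rpow (adjoint S * S) (2 * r)) x, x⟫_ℂ := by
  have hsplit : (‖⟪S x, x⟫_ℂ‖ ^ 2 + ‖S x‖ ^ 4) ^ r
      ≤ 2 ^ (r - 1) * (‖⟪S x, x⟫_ℂ‖ ^ (2 * r) + ‖S x‖ ^ (2 * (2 * r))) := by
    convert Real.rpow_add_le_mul_rpow_add_rpow (sq_nonneg ‖⟪S x, x⟫_ℂ‖)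
      (by positivity : 0 ≤ ‖S x‖ ^ 4) hr using 3
    · exact_mod_cast Real.rpow_natCast_mul (norm_nonneg _) 2 r
    · rw [← mul_assoc]; exact_mod_cast Real.rpow_natCast_mul (norm_nonneg _) 4 r
  have hinner := norm_inner_apply_rpow_le S hα0 hα1 (by linarith : (0 : ℝ) ≤ 2 * r) hx
  have hS := norm_apply_rpow_le_re_inner_rpow S hr hx
  have hS' := norm_apply_rpow_le_re_inner_rpow (adjoint S) hr hx
  have hS2 := norm_apply_rpow_le_re_inner_rpow S (by linarith : 1 ≤ 2 * r) hx
  refine hsplit.trans (mul_le_mul_of_nonneg_left ?_ (by positivity))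
  simp only [add_apply, smul_apply, inner_add_left, inner_smul_left_eq_smul, map_add, smul_re]
  nlinarith

theorem dw_rpow_bound' (S : H →L[ℂ] H) (α r : ℝ) (hα : α ∈ Set.Icc (0 : ℝ) 1) (hr : 1 ≤ r) :
    dwRadius S ^ (2 * r) ≤ 2 ^ (r - 1) *
      ‖α • CFC.rpow (opAbs S) (2 * r)
        + (1 - α) • CFC.rpow (opAbs (ContinuousLinearMap.adjoint S)) (2 * r)
        + CFC.rpow (ContinuousLinearMap.adjoint S * S) (2 * r)‖ := by
  rw [rpow_opAbs_two_mul S (by linarith), rpow_opAbs_two_mul (adjoint S) (by linarith)]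
  refine dwRadius_rpow_le S (by linarith) (by positivity) fun x hx => ?_
  refine (inner_sq_add_norm_pow_four_rpow_le S hα.1 hα.2 hr hx).trans ?_
  gcongr
  simpa only [hx, one_pow, mul_one] using re_inner_le_opNorm_mul_sq _ x
end

section
/- For any unit vector x in a complex Hilbert space and a bounded linear operator S, for r ≥ 1 and α ∈ [0,1]: |⟨Sx,x⟩|^{2r} ≤ ⟨(α|S|^{2r} + (1−α)|S*|^{2r})x, x⟩. -/
/-!
By Cauchy–Schwarz, `‖⟪S x, x⟫‖² ≤ ‖S x‖² = re ⟪|S|² x, x⟫`, and the same bound holds with `S†`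
since `‖⟪S† x, x⟫‖ = ‖⟪S x, x⟫‖`. The Hölder–McCarthy inequality `re ⟪T x, x⟫ ^ r ≤ re ⟪T ^ r x, x⟫`
for `0 ≤ T` and `1 ≤ r`, obtained by applying the functional calculus to the tangent-line bound
`c ^ r + r c ^ (r - 1) (t - c) ≤ t ^ r`, then bounds `‖⟪S x, x⟫‖ ^ (2r)` by both
`re ⟪|S| ^ (2r) x, x⟫` and `re ⟪|S†| ^ (2r) x, x⟫`, hence by any convex combination of them.
-/

open scoped InnerProductSpace

variable {H : Type*} [NormedAddCommGroup H] [InnerProductSpace ℂ H] [CompleteSpace H]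

open ContinuousLinearMap RCLike

theorem Real.one_sub_mul_rpow_add_mul_le_rpow {c t r : ℝ} (hc : 0 < c) (ht : 0 ≤ t)
    (hr : 1 ≤ r) : (1 - r) * c ^ r + r * c ^ (r - 1) * t ≤ t ^ r := by
  have hb := one_add_mul_self_le_rpow_one_add (s := t / c - 1)
    (by linarith [div_nonneg ht hc.le]) hr
  rw [add_sub_cancel, Real.div_rpow ht hc.le, le_div_iff₀ (Real.rpow_pos_of_pos hc r)] at hb
  calc (1 - r) * c ^ r + r * c ^ (r - 1) * t = (1 + r * (t / c - 1)) * c ^ r := by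
        rw [Real.rpow_sub_one hc.ne']; field_simp; ring
    _ ≤ t ^ r := hb

theorem CFC.one_sub_mul_rpow_add_smul_le_rpow {A : Type*} [PartialOrder A] [Ring A] [StarRing A]
    [TopologicalSpace A] [StarOrderedRing A] [Algebra ℝ A]
    [ContinuousFunctionalCalculus ℝ A IsSelfAdjoint] [NonnegSpectrumClass ℝ A]
    [IsSemitopologicalRing A] [T2Space A] {a : A} (ha : 0 ≤ a) {c r : ℝ} (hc : 0 < c)
    (hr : 1 ≤ r) :
    algebraMap ℝ A ((1 - r) * c ^ r) + (r * c ^ (r - 1)) • a ≤ a ^ r := by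
  calc algebraMap ℝ A ((1 - r) * c ^ r) + (r * c ^ (r - 1)) • a
      = cfc (fun t : ℝ => (1 - r) * c ^ r + r * c ^ (r - 1) * t) a := by
        rw [cfc_add .., cfc_const .., cfc_const_mul .., cfc_id' ℝ a]
    _ ≤ cfc (fun t : ℝ => t ^ r) a :=
        cfc_mono (fun t ht => Real.one_sub_mul_rpow_add_mul_le_rpow hc
          (spectrum_nonneg_of_nonneg ha ht) hr)
          (hg := (Real.continuous_rpow_const (by linarith)).continuousOn)
    _ = a ^ r := (CFC.rpow_eq_cfc_real ha).symm

theorem ContinuousLinearMap.re_inner_apply_le_of_le_s13 {𝕜 E : Type*} [RCLike 𝕜]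
    [NormedAddCommGroup E] [InnerProductSpace 𝕜 E] {T T' : E →L[𝕜] E} (h : T ≤ T') (x : E) :
    re ⟪T x, x⟫_𝕜 ≤ re ⟪T' x, x⟫_𝕜 := by
  have := h.re_inner_nonneg_left x
  simpa [inner_sub_left] using this

theorem ContinuousLinearMap.re_inner_algebraMap_apply_self {E : Type*}
    [NormedAddCommGroup E] [InnerProductSpace ℂ E] {x : E} (hx : ‖x‖ = 1) (k : ℝ) :
    re ⟪algebraMap ℝ (E →L[ℂ] E) k x, x⟫_ℂ = k := by
  simp [Algebra.algebraMap_eq_smul_one, inner_self_eq_norm_sq_to_K, hx]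

theorem ContinuousLinearMap.adjoint_mul_self_nonneg_s13 {𝕜 E : Type*} [RCLike 𝕜]
    [NormedAddCommGroup E] [InnerProductSpace 𝕜 E] [CompleteSpace E] (S : E →L[𝕜] E) :
    0 ≤ adjoint S * S :=
  (nonneg_iff_isPositive _).mpr (isPositive_adjoint_comp_self S)

/-- Hölder–McCarthy: `T ^ r` dominates its tangent at the scalar `re ⟪T x, x⟫`. -/
theorem ContinuousLinearMap.re_inner_rpow_le_re_inner_rpow_apply {T : H →L[ℂ] H} (hT : 0 ≤ T)
    {x : H} (hx : ‖x‖ = 1) {r : ℝ} (hr : 1 ≤ r) :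
    re ⟪T x, x⟫_ℂ ^ r ≤ re ⟪(T ^ r) x, x⟫_ℂ := by
  set c := re ⟪T x, x⟫_ℂ
  rcases (show 0 ≤ c from ((nonneg_iff_isPositive T).mp hT).re_inner_nonneg_left x).eq_or_lt
    with hc | hc
  · rw [← hc, Real.zero_rpow (by linarith)]
    exact ((nonneg_iff_isPositive _).mp CFC.rpow_nonneg).re_inner_nonneg_left x
  · calc c ^ r = re ⟪(algebraMap ℝ _ ((1 - r) * c ^ r) + (r * c ^ (r - 1)) • T) x, x⟫_ℂ := by
          simp only [add_apply, smul_apply, inner_add_left, map_add,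
            re_inner_algebraMap_apply_self hx]
          rw [inner_smul_left_eq_smul, smul_re, Real.rpow_sub_one hc.ne']
          field_simp
          ring
      _ ≤ re ⟪(T ^ r) x, x⟫_ℂ :=
          re_inner_apply_le_of_le_s13 (CFC.one_sub_mul_rpow_add_smul_le_rpow hT hc hr) x

theorem opAbs_rpow_two_mul (S : H →L[ℂ] H) {r : ℝ} (hr : 0 ≤ r) :
    opAbs S ^ (2 * r) = (adjoint S * S) ^ r := by
  have := CFC.rpow_sqrt_nnreal (a := adjoint S * S) (x := (2 * r).toNNReal)
    (adjoint_mul_self_nonneg_s13 S)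
  rwa [Real.coe_toNNReal _ (by positivity), mul_div_cancel_left₀ r two_ne_zero] at this

theorem norm_inner_apply_self_rpow_le (S : H →L[ℂ] H) {x : H} (hx : ‖x‖ = 1) {r : ℝ}
    (hr : 1 ≤ r) : ‖⟪S x, x⟫_ℂ‖ ^ (2 * r) ≤ re ⟪(opAbs S ^ (2 * r)) x, x⟫_ℂ := by
  have hCS : ‖⟪S x, x⟫_ℂ‖ ^ 2 ≤ re ⟪(adjoint S * S) x, x⟫_ℂ := by
    rw [mul_def, ← apply_norm_sq_eq_inner_adjoint_left]
    simpa [hx] using pow_le_pow_left₀ (norm_nonneg _) (norm_inner_le_norm (𝕜 := ℂ) (S x) x) 2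
  calc ‖⟪S x, x⟫_ℂ‖ ^ (2 * r) = (‖⟪S x, x⟫_ℂ‖ ^ 2) ^ r := by
        rw [Real.rpow_mul (norm_nonneg _), Real.rpow_two]
    _ ≤ re ⟪(adjoint S * S) x, x⟫_ℂ ^ r := by gcongr
    _ ≤ re ⟪((adjoint S * S) ^ r) x, x⟫_ℂ :=
        re_inner_rpow_le_re_inner_rpow_apply (adjoint_mul_self_nonneg_s13 S) hx hr
    _ = re ⟪(opAbs S ^ (2 * r)) x, x⟫_ℂ := by rw [opAbs_rpow_two_mul S (by linarith)]

theorem inner_rpow_bound (S : H →L[ℂ] H) (x : H) (hx : ‖x‖ = 1)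
    (α r : ℝ) (hα : α ∈ Set.Icc (0 : ℝ) 1) (hr : 1 ≤ r) :
    ‖(⟪S x, x⟫_ℂ : ℂ)‖ ^ (2 * r) ≤
      (⟪(α • CFC.rpow (opAbs S) (2 * r)
        + (1 - α) • CFC.rpow (opAbs (ContinuousLinearMap.adjoint S)) (2 * r)) x, x⟫_ℂ : ℂ).re := by
  have hS := norm_inner_apply_self_rpow_le S hx hr
  have hS' := norm_inner_apply_self_rpow_le (adjoint S) hx hr
  rw [adjoint_inner_left, norm_inner_symm] at hS'
  simp only [re_to_complex] at hS hS'
  simp only [CFC.rpow_eq_pow, add_apply, smul_apply, inner_add_left, Complex.add_re,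
    inner_smul_left_eq_smul, Complex.smul_re, smul_eq_mul]
  nlinarith [hα.1, hα.2]
end

section
/- For bounded linear operators S₁,…,Sₙ on a complex Hilbert space, max{w_e(S₁,…,Sₙ), w_e(|S₁|²,…,|Sₙ|²)} ≤ dw_e(S₁,…,Sₙ) ≤ w_e(S₁,…,Sₙ) + w_e(|S₁|²,…,|Sₙ|²), where dw_e(S₁,…,Sₙ) = sup_{‖x‖=1}(Σ_i (|⟨S_ix,x⟩|² + ‖S_ix‖⁴))^{1/2}. -/
open scoped InnerProductSpace

variable {H : Type*} [NormedAddCommGroup H] [InnerProductSpace ℂ H] [CompleteSpace H]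

/-- The Euclidean operator radius of an `n`-tuple of operators. -/
noncomputable def eucRadius {n : ℕ} (T : Fin n → (H →L[ℂ] H)) : ℝ :=
  ⨆ x : {x : H // ‖x‖ = 1}, Real.sqrt (∑ i, ‖(⟪T i x.1, x.1⟫_ℂ : ℂ)‖ ^ 2)

/-- The Euclidean Davis–Wielandt radius of an `n`-tuple of operators. -/
noncomputable def eucDwRadius {n : ℕ} (S : Fin n → (H →L[ℂ] H)) : ℝ :=
  ⨆ x : {x : H // ‖x‖ = 1},
    Real.sqrt (∑ i, (‖(⟪S i x.1, x.1⟫_ℂ : ℂ)‖ ^ 2 + ‖S i x.1‖ ^ 4))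

lemma sqrt_add_le' {a b : ℝ} (ha : 0 ≤ a) (hb : 0 ≤ b) :
    Real.sqrt (a + b) ≤ Real.sqrt a + Real.sqrt b := by
  have h1 := Real.sq_sqrt ha
  have h2 := Real.sq_sqrt hb
  have h3 := Real.sqrt_nonneg a
  have h4 := Real.sqrt_nonneg b
  rw [show Real.sqrt a + Real.sqrt b = Real.sqrt ((Real.sqrt a + Real.sqrt b) ^ 2) by
    rw [Real.sqrt_sq (by positivity)]]
  apply Real.sqrt_le_sqrt
  nlinarith [mul_nonneg h3 h4]

lemma inner_adjoint_mul {T : H →L[ℂ] H} (x : H) :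
    ‖(⟪(ContinuousLinearMap.adjoint T * T) x, x⟫_ℂ : ℂ)‖ ^ 2 = ‖T x‖ ^ 4 := by
  have : (⟪(ContinuousLinearMap.adjoint T * T) x, x⟫_ℂ : ℂ) = ⟪T x, T x⟫_ℂ := by
    simp [ContinuousLinearMap.mul_apply, ContinuousLinearMap.adjoint_inner_left]
  rw [this, inner_self_eq_norm_sq_to_K]
  rw [show (4 : ℕ) = 2 * 2 by norm_num, pow_mul]
  congr 1
  simp [norm_pow]

lemma bdd_dw {n : ℕ} (S : Fin n → (H →L[ℂ] H)) :
    BddAbove (Set.range fun x : {x : H // ‖x‖ = 1} =>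
      Real.sqrt (∑ i, (‖(⟪S i x.1, x.1⟫_ℂ : ℂ)‖ ^ 2 + ‖S i x.1‖ ^ 4))) := by
  refine ⟨Real.sqrt (∑ i, (‖S i‖ ^ 2 + ‖S i‖ ^ 4)), ?_⟩
  rintro r ⟨x, rfl⟩
  apply Real.sqrt_le_sqrt
  apply Finset.sum_le_sum
  intro i _
  have hx : ‖x.1‖ = 1 := x.2
  have h1 : ‖S i x.1‖ ≤ ‖S i‖ := by
    simpa [hx] using (S i).le_opNorm x.1
  have h2 : ‖(⟪S i x.1, x.1⟫_ℂ : ℂ)‖ ≤ ‖S i‖ := by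
    calc ‖(⟪S i x.1, x.1⟫_ℂ : ℂ)‖ ≤ ‖S i x.1‖ * ‖x.1‖ := norm_inner_le_norm _ _
    _ ≤ ‖S i‖ := by rw [hx, mul_one]; exact h1
  gcongr

lemma bdd_r {n : ℕ} (T : Fin n → (H →L[ℂ] H)) :
    BddAbove (Set.range fun x : {x : H // ‖x‖ = 1} =>
      Real.sqrt (∑ i, ‖(⟪T i x.1, x.1⟫_ℂ : ℂ)‖ ^ 2)) := by
  refine ⟨Real.sqrt (∑ i, ‖T i‖ ^ 2), ?_⟩
  rintro r ⟨x, rfl⟩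
  apply Real.sqrt_le_sqrt
  apply Finset.sum_le_sum
  intro i _
  have hx : ‖x.1‖ = 1 := x.2
  have h1 : ‖T i x.1‖ ≤ ‖T i‖ := by
    simpa [hx] using (T i).le_opNorm x.1
  have h2 : ‖(⟪T i x.1, x.1⟫_ℂ : ℂ)‖ ≤ ‖T i‖ := by
    calc ‖(⟪T i x.1, x.1⟫_ℂ : ℂ)‖ ≤ ‖T i x.1‖ * ‖x.1‖ := norm_inner_le_norm _ _
    _ ≤ ‖T i‖ := by rw [hx, mul_one]; exact h1
  gcongr

theorem eucDwRadius_bounds {n : ℕ} (S : Fin n → (H →L[ℂ] H)) :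
    max (eucRadius S)
        (eucRadius fun i => ContinuousLinearMap.adjoint (S i) * S i)
      ≤ eucDwRadius S ∧
    eucDwRadius S ≤ eucRadius S
      + eucRadius fun i => ContinuousLinearMap.adjoint (S i) * S i := by
  unfold eucRadius eucDwRadius
  rcases isEmpty_or_nonempty {x : H // ‖x‖ = 1} with he | hne
  · simp [Real.iSup_of_isEmpty]
  constructor
  · apply max_le
    · apply ciSup_mono (bdd_dw S)
      intro x
      apply Real.sqrt_le_sqrt
      apply Finset.sum_le_sum
      intro i _
      nlinarith [sq_nonneg (‖S i x.1‖ ^ 2)]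
    · apply ciSup_mono (bdd_dw S)
      intro x
      apply Real.sqrt_le_sqrt
      apply Finset.sum_le_sum
      intro i _
      rw [inner_adjoint_mul]
      exact le_add_of_nonneg_left (by positivity)
  · apply ciSup_le
    intro x
    calc Real.sqrt (∑ i, (‖(⟪S i x.1, x.1⟫_ℂ : ℂ)‖ ^ 2 + ‖S i x.1‖ ^ 4))
        = Real.sqrt ((∑ i, ‖(⟪S i x.1, x.1⟫_ℂ : ℂ)‖ ^ 2) + ∑ i, ‖S i x.1‖ ^ 4) := by
          rw [Finset.sum_add_distrib]
      _ ≤ Real.sqrt (∑ i, ‖(⟪S i x.1, x.1⟫_ℂ : ℂ)‖ ^ 2)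
          + Real.sqrt (∑ i, ‖S i x.1‖ ^ 4) := by
          apply sqrt_add_le' <;> positivity
      _ ≤ _ := by
          apply add_le_add
          · exact le_ciSup (bdd_r S) x
          · have : Real.sqrt (∑ i, ‖S i x.1‖ ^ 4)
                = Real.sqrt (∑ i, ‖(⟪(ContinuousLinearMap.adjoint (S i) * S i) x.1, x.1⟫_ℂ : ℂ)‖ ^ 2) := by
              congr 1
              exact Finset.sum_congr rfl fun i _ => (inner_adjoint_mul x.1).symm
            rw [this]
            exact le_ciSup (bdd_r _) x
end
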